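/- Let G be a finite multigraph whose edges are each colored red or blue, such that at every vertex the number of incident red edges equals the number of incident blue edges. Then the edge set of G decomposes into edge-disjoint closed trails in which red and blue edges alternate. -/
import Mathlib


open Finset

/-- An alternating closed trail in a red/blue edge-colored multigraph with edge
type `E`, endpoint map `ends` and coloring `color` (`true` = red, `false` =
blue): a cyclic sequence of pairwise distinct edges in which consecutive edges
share an endpoint and the colors alternate along the trail. -/
structure AltClosedTrail (V E : Type*) (ends : E → Sym2 V) (color : E → Bool) where
  /-- the length of the closed trail -/
  n : ℕ
  two_le : 2 ≤ n
  /-- the cyclic sequence of edges -/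
  edge : ℕ → E
  /-- the cyclic sequence of vertices visited -/
  vert : ℕ → V
  edge_periodic : ∀ i, edge (i + n) = edge i
  vert_periodic : ∀ i, vert (i + n) = vert i
  inj : ∀ i < n, ∀ j < n, edge i = edge j → i = j
  ends_eq : ∀ i, ends (edge i) = s(vert i, vert (i + 1))
  alt : ∀ i, color (edge i) = !color (edge (i + 1))

section Auxiliary

open Function
set_option linter.unusedSectionVars false
set_option linter.unusedTactic false

namespace AltTrailAux

variable {V E : Type*} [DecidableEq V] [DecidableEq E]

section OtherEnd

variable (ends : E → Sym2 V)

/-- The other endpoint of an edge. -/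
def otherEnd (e : E) (v : V) : V := if h : v ∈ ends e then Sym2.Mem.other' h else v

variable {ends}

theorem otherEnd_spec {e : E} {v : V} (h : v ∈ ends e) :
    s(v, otherEnd ends e v) = ends e := by
  rw [otherEnd, dif_pos h]; exact Sym2.other_spec' h

theorem otherEnd_mem {e : E} {v : V} (h : v ∈ ends e) : otherEnd ends e v ∈ ends e := by
  rw [otherEnd, dif_pos h]; exact Sym2.other_mem' h

theorem otherEnd_otherEnd {e : E} {v : V} (h : v ∈ ends e) :
    otherEnd ends e (otherEnd ends e v) = v := by
  have h2 : otherEnd ends e v = Sym2.Mem.other' h := by rw [otherEnd, dif_pos h]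
  rw [h2, otherEnd, dif_pos (Sym2.other_mem' h)]
  exact Sym2.other_invol' h (Sym2.other_mem' h)

theorem otherEnd_ne {e : E} {v : V} (hd : ¬ (ends e).IsDiag) (h : v ∈ ends e) :
    otherEnd ends e v ≠ v := by
  rw [otherEnd, dif_pos h, ← Sym2.other_eq_other']
  exact Sym2.other_ne hd h

theorem eq_otherEnd {e : E} {v w : V} (h : v ∈ ends e) (hw : w ∈ ends e) (hne : w ≠ v) :
    w = otherEnd ends e v := by
  rw [← otherEnd_spec h, Sym2.mem_iff] at hw
  tauto

end OtherEnd


section Pairing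

variable [Fintype V] [Fintype E]
variable (ends : E → Sym2 V) (color : E → Bool)
variable (hdeg : ∀ v : V,
      (Finset.univ.filter fun e : E => v ∈ ends e ∧ color e = true).card =
      (Finset.univ.filter fun e : E => v ∈ ends e ∧ color e = false).card)

/-- The pairing at vertex `v`: an involution on the edges incident to `v`
swapping red and blue edges. -/
noncomputable def pair (v : V) (e : E) : E :=
  if h : e ∈ Finset.univ.filter (fun e : E => v ∈ ends e ∧ color e = true) then
    ((Finset.equivOfCardEq (hdeg v)) ⟨e, h⟩ : {x // x ∈ Finset.univ.filter
      (fun e : E => v ∈ ends e ∧ color e = false)})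
  else if h' : e ∈ Finset.univ.filter (fun e : E => v ∈ ends e ∧ color e = false) then
    ((Finset.equivOfCardEq (hdeg v)).symm ⟨e, h'⟩ : {x // x ∈ Finset.univ.filter
      (fun e : E => v ∈ ends e ∧ color e = true)})
  else e

variable {ends color}

theorem pair_eq_true {v : V} {e : E}
    (h1 : e ∈ Finset.univ.filter (fun e : E => v ∈ ends e ∧ color e = true)) :
    pair ends color hdeg v e = ((Finset.equivOfCardEq (hdeg v)) ⟨e, h1⟩ : E) := by
  rw [pair, dif_pos h1]

theorem pair_eq_false {v : V} {e : E}
    (h2 : e ∈ Finset.univ.filter (fun e : E => v ∈ ends e ∧ color e = false)) :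
    pair ends color hdeg v e = ((Finset.equivOfCardEq (hdeg v)).symm ⟨e, h2⟩ : E) := by
  have h1 : e ∉ Finset.univ.filter (fun e : E => v ∈ ends e ∧ color e = true) := by
    rw [Finset.mem_filter] at h2 ⊢
    simp [h2.2.2]
  rw [pair, dif_neg h1, dif_pos h2]

theorem pair_mem_color {v : V} {e : E} (h : v ∈ ends e) :
    v ∈ ends (pair ends color hdeg v e) ∧
      color (pair ends color hdeg v e) = !color e := by
  rcases Bool.eq_false_or_eq_true (color e) with hc | hc
  · have h1 : e ∈ Finset.univ.filter (fun e : E => v ∈ ends e ∧ color e = true) := by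
      simp [hc, h]
    rw [pair_eq_true hdeg h1]
    have := ((Finset.equivOfCardEq (hdeg v)) ⟨e, h1⟩).2
    rw [Finset.mem_filter] at this
    simp [this.2.1, this.2.2, hc]
  · have h2 : e ∈ Finset.univ.filter (fun e : E => v ∈ ends e ∧ color e = false) := by
      simp [hc, h]
    rw [pair_eq_false hdeg h2]
    have := ((Finset.equivOfCardEq (hdeg v)).symm ⟨e, h2⟩).2
    rw [Finset.mem_filter] at this
    simp [this.2.1, this.2.2, hc]

theorem pair_mem {v : V} {e : E} (h : v ∈ ends e) :
    v ∈ ends (pair ends color hdeg v e) := (pair_mem_color hdeg h).1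

theorem pair_color {v : V} {e : E} (h : v ∈ ends e) :
    color (pair ends color hdeg v e) = !color e := (pair_mem_color hdeg h).2

theorem pair_pair {v : V} {e : E} (h : v ∈ ends e) :
    pair ends color hdeg v (pair ends color hdeg v e) = e := by
  rcases Bool.eq_false_or_eq_true (color e) with hc | hc
  · have h1 : e ∈ Finset.univ.filter (fun e : E => v ∈ ends e ∧ color e = true) := by
      simp [hc, h]
    set b := (Finset.equivOfCardEq (hdeg v)) ⟨e, h1⟩ with hbdef
    have hpe : pair ends color hdeg v e = (b : E) := pair_eq_true hdeg h1
    have hb2 : (b : E) ∈ Finset.univ.filter (fun e : E => v ∈ ends e ∧ color e = false) := b.2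
    rw [hpe, pair_eq_false hdeg hb2]
    have : (⟨(b : E), hb2⟩ : {x // x ∈ Finset.univ.filter
        (fun e : E => v ∈ ends e ∧ color e = false)}) = b := Subtype.ext rfl
    rw [this, hbdef, Equiv.symm_apply_apply]
  · have h2 : e ∈ Finset.univ.filter (fun e : E => v ∈ ends e ∧ color e = false) := by
      simp [hc, h]
    set b := (Finset.equivOfCardEq (hdeg v)).symm ⟨e, h2⟩ with hbdef
    have hpe : pair ends color hdeg v e = (b : E) := pair_eq_false hdeg h2
    have hb1 : (b : E) ∈ Finset.univ.filter (fun e : E => v ∈ ends e ∧ color e = true) := b.2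
    rw [hpe, pair_eq_true hdeg hb1]
    have : (⟨(b : E), hb1⟩ : {x // x ∈ Finset.univ.filter
        (fun e : E => v ∈ ends e ∧ color e = true)}) = b := Subtype.ext rfl
    rw [this, hbdef, Equiv.apply_symm_apply]

/-- A dart: an edge together with one of its endpoints (the exit vertex). -/
abbrev Dart (ends : E → Sym2 V) := {p : E × V // p.2 ∈ ends p.1}

variable {hdeg}

/-- Reverse a dart. -/
def flipD (d : Dart ends) : Dart ends :=
  ⟨(d.1.1, otherEnd ends d.1.1 d.1.2), otherEnd_mem d.2⟩

/-- The successor dart. -/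
noncomputable def nextD (d : Dart ends) : Dart ends :=
  ⟨(pair ends color hdeg d.1.2 d.1.1,
    otherEnd ends (pair ends color hdeg d.1.2 d.1.1) d.1.2),
   otherEnd_mem (pair_mem hdeg d.2)⟩

theorem flipD_fst (d : Dart ends) : (flipD d).1.1 = d.1.1 := rfl

theorem flipD_flipD (d : Dart ends) : flipD (flipD d) = d := by
  apply Subtype.ext
  exact Prod.ext rfl (otherEnd_otherEnd d.2)

theorem flipD_ne (hloopless : ∀ e : E, ¬ (ends e).IsDiag) (d : Dart ends) :
    flipD d ≠ d := by
  intro hcon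
  exact otherEnd_ne (hloopless d.1.1) d.2 (congrArg (fun x => x.1.2) hcon)

theorem nextD_color (d : Dart ends) :
    color (nextD (hdeg := hdeg) d).1.1 = !color d.1.1 := pair_color hdeg d.2

theorem nextD_flipD_nextD (d : Dart ends) :
    nextD (hdeg := hdeg) (flipD (nextD (hdeg := hdeg) d)) = flipD d := by
  obtain ⟨⟨e, v⟩, h⟩ := d
  have h1 : otherEnd ends (pair ends color hdeg v e)
      (otherEnd ends (pair ends color hdeg v e) v) = v :=
    otherEnd_otherEnd (pair_mem hdeg h)
  have key : flipD (nextD (hdeg := hdeg) ⟨(e, v), h⟩) =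
      (⟨(pair ends color hdeg v e, v), pair_mem hdeg h⟩ : Dart ends) := by
    apply Subtype.ext
    exact Prod.ext rfl h1
  rw [key]
  apply Subtype.ext
  have h2 : pair ends color hdeg v (pair ends color hdeg v e) = e := pair_pair hdeg h
  show (pair ends color hdeg v (pair ends color hdeg v e),
      otherEnd ends (pair ends color hdeg v (pair ends color hdeg v e)) v) =
    (e, otherEnd ends e v)
  rw [h2]

theorem nextD_injective :
    Function.Injective (nextD (ends := ends) (color := color) (hdeg := hdeg)) := by
  intro d1 d2 hnd
  have h1 := nextD_flipD_nextD (hdeg := hdeg) d1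
  have h2 := nextD_flipD_nextD (hdeg := hdeg) d2
  rw [hnd] at h1
  rw [h2] at h1
  have := congrArg flipD h1
  rwa [flipD_flipD, flipD_flipD, eq_comm] at this

end Pairing

section Orbits

variable [Fintype V] [Fintype E]
variable {ends : E → Sym2 V} {color : E → Bool}
variable (hloopless : ∀ e : E, ¬ (ends e).IsDiag)
variable (f : Dart ends → Dart ends)
variable (hR : ∀ d, f (flipD (f d)) = flipD d)
variable (hmem : ∀ d : Dart ends, d.1.2 ∈ ends (f d).1.1)
variable (hstep : ∀ d : Dart ends, (f d).1.2 = otherEnd ends (f d).1.1 d.1.2)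
variable (hcol : ∀ d : Dart ends, color (f d).1.1 = !color d.1.1)

include hR in
theorem f_inj : Function.Injective f := by
  intro d1 d2 hnd
  have h1 := hR d1
  have h2 := hR d2
  rw [hnd, h2] at h1
  have := congrArg flipD h1
  rwa [flipD_flipD, flipD_flipD, eq_comm] at this

include hR in
theorem mp_pos (x : Dart ends) : 0 < Function.minimalPeriod f x := by
  obtain ⟨a, b, hne, hab⟩ := Finite.exists_ne_map_eq_of_infinite (fun n : ℕ => f^[n] x)
  wlog hlt : a < b generalizing a b
  · exact this b a hne.symm hab.symm (by omega)
  have hx : f^[a] (f^[(b - a)] x) = f^[a] x := by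
    have h1 : a + (b - a) = b := by omega
    rw [← Function.iterate_add_apply, h1]
    exact hab.symm
  have hper : Function.IsPeriodicPt f (b - a) x := (f_inj f hR).iterate a hx
  exact hper.minimalPeriod_pos (by omega)

include hR in
theorem conjL : ∀ (n : ℕ) (x : Dart ends), f^[n] (flipD (f^[n] x)) = flipD x := by
  intro n
  induction n with
  | zero => intro x; simp
  | succ n ih =>
    intro x
    rw [Function.iterate_succ_apply' f n x, Function.iterate_succ_apply f n]
    rw [hR (f^[n] x)]
    exact ih x

include hcol in
theorem color_iterate (i : ℕ) (x : Dart ends) :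
    color ((f^[i] x)).1.1 = if Even i then color x.1.1 else !color x.1.1 := by
  induction i with
  | zero => simp
  | succ i ih =>
    rw [Function.iterate_succ_apply', hcol]
    rcases Nat.even_or_odd i with hi | hi
    · simp [hi, Nat.even_add_one, ih]
    · simp [Nat.not_even_iff_odd.mpr hi, Nat.even_add_one, ih]

include hcol in
theorem even_mp (x : Dart ends) : Even (Function.minimalPeriod f x) := by
  by_contra hodd
  have h1 := color_iterate f hcol (Function.minimalPeriod f x) x
  rw [Function.iterate_minimalPeriod, if_neg hodd] at h1
  simp at h1

/-- The set of edges in the orbit of a dart. -/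
noncomputable def orbitEdges (x : Dart ends) : Finset E :=
  (Finset.range (Function.minimalPeriod f x)).image (fun i => (f^[i] x).1.1)

include hR in
theorem mem_orbitEdges {x : Dart ends} {e : E} :
    e ∈ orbitEdges f x ↔ ∃ n, (f^[n] x).1.1 = e := by
  unfold orbitEdges
  rw [Finset.mem_image]
  constructor
  · rintro ⟨n, _, hn⟩
    exact ⟨n, hn⟩
  · rintro ⟨n, hn⟩
    exact ⟨n % Function.minimalPeriod f x,
      Finset.mem_range.mpr (Nat.mod_lt _ (mp_pos f hR x)),
      by rw [Function.iterate_mod_minimalPeriod_eq]; exact hn⟩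

include hR in
theorem orbitEdges_apply (x : Dart ends) : orbitEdges f (f x) = orbitEdges f x := by
  ext e
  rw [mem_orbitEdges f hR, mem_orbitEdges f hR]
  constructor
  · rintro ⟨n, hn⟩
    exact ⟨n + 1, by rwa [Function.iterate_succ_apply]⟩
  · rintro ⟨n, hn⟩
    set m := Function.minimalPeriod f x with hm
    have hmp : 0 < m := mp_pos f hR x
    have h1 : n + m - 1 + 1 = n + m := by omega
    refine ⟨n + m - 1, ?_⟩
    have h2 : f^[n + m - 1] (f x) = f^[n] x := by
      have h3 : f^[n + Function.minimalPeriod f x] x = f^[n] x :=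
        Function.iterate_add_minimalPeriod_eq
      rw [← hm] at h3
      rw [← h1] at h3
      rwa [Function.iterate_succ_apply] at h3
    rw [h2]
    exact hn

include hR in
theorem orbitEdges_iterate (x : Dart ends) (i : ℕ) :
    orbitEdges f (f^[i] x) = orbitEdges f x := by
  induction i with
  | zero => rfl
  | succ i ih =>
    rw [Function.iterate_succ_apply', orbitEdges_apply f hR, ih]

include hR in
theorem orbitEdges_flip_subset (x : Dart ends) :
    orbitEdges f (flipD x) ⊆ orbitEdges f x := by
  intro e he
  rw [mem_orbitEdges f hR] at he ⊢
  obtain ⟨n, hn⟩ := he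
  set m := Function.minimalPeriod f x with hm
  have hmp : 0 < m := mp_pos f hR x
  refine ⟨n * (m - 1), ?_⟩
  have hx : f^[n] (f^[n * (m - 1)] x) = x := by
    rw [← Function.iterate_add_apply]
    obtain ⟨k, hk⟩ : ∃ k, m = k + 1 := ⟨m - 1, by omega⟩
    have h1 : n + n * (m - 1) = n * m := by
      rw [hk, Nat.add_sub_cancel, Nat.mul_add, Nat.mul_one]
      omega
    rw [h1, hm]
    exact ((Function.isPeriodicPt_minimalPeriod f x).const_mul n).eq
  have hc := conjL f hR n (f^[n * (m - 1)] x)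
  rw [hx] at hc
  rw [hc, flipD_fst] at hn
  exact hn

include hR in
theorem orbitEdges_flip (x : Dart ends) : orbitEdges f (flipD x) = orbitEdges f x := by
  refine subset_antisymm (orbitEdges_flip_subset f hR x) ?_
  have := orbitEdges_flip_subset f hR (flipD x)
  rwa [flipD_flipD] at this

theorem dart_eq_or_flip (d1 d2 : Dart ends) (he : d1.1.1 = d2.1.1) :
    d2 = d1 ∨ d2 = flipD d1 := by
  by_cases hv : d2.1.2 = d1.1.2
  · left
    apply Subtype.ext
    exact Prod.ext he.symm hv
  · right
    apply Subtype.ext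
    refine Prod.ext he.symm ?_
    exact eq_otherEnd d1.2 (by rw [he]; exact d2.2) hv

include hloopless hR hmem hstep hcol in
theorem exists_trail (x : Dart ends) :
    ∃ T : AltClosedTrail V E ends color,
      (Finset.range T.n).image T.edge = orbitEdges f x := by
  set m := Function.minimalPeriod f x with hm
  have hmp : 0 < m := mp_pos f hR x
  have hme : Even m := even_mp f hcol x
  have hperiod : ∀ i : ℕ, f^[i + m] x = f^[i] x := by
    intro i
    rw [Function.iterate_add_apply, hm, Function.iterate_minimalPeriod]
  refine ⟨⟨m, ?_, fun i => (f^[i] x).1.1,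
      fun i => otherEnd ends (f^[i] x).1.1 (f^[i] x).1.2, ?_, ?_, ?_, ?_, ?_⟩,
    rfl⟩
  · obtain ⟨t, ht⟩ := hme
    omega
  · intro i
    beta_reduce
    rw [hperiod i]
  · intro i
    beta_reduce
    rw [hperiod i]
  · -- injectivity
    intro i hi j hj hij
    beta_reduce at hij
    by_cases hd : f^[i] x = f^[j] x
    · exact Function.iterate_injOn_Iio_minimalPeriod (Set.mem_Iio.mpr hi)
        (Set.mem_Iio.mpr hj) hd
    · exfalso
      rcases dart_eq_or_flip (f^[i] x) (f^[j] x) hij with h | h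
      · exact hd h.symm
      have hci := color_iterate f hcol i x
      have hcj := color_iterate f hcol j x
      rw [hij] at hci
      have hpar : Even i ↔ Even j := by
        rw [hcj] at hci
        by_cases h1 : Even i <;> by_cases h2 : Even j <;>
          simp [h1, h2] at hci ⊢
      have hk_even : Even (i + j) := Nat.even_add.mpr hpar
      have hc := conjL f hR i x
      rw [← h, ← Function.iterate_add_apply] at hc
      have hmod : f^[(i + j) % m] x = flipD x := by
        rw [hm, Function.iterate_mod_minimalPeriod_eq, hc]
      have hkm_even : Even ((i + j) % m) := by
        have h1 : (i + j) % m + m * ((i + j) / m) = i + j := Nat.mod_add_div _ _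
        obtain ⟨a, ha⟩ := hme.mul_right ((i + j) / m)
        obtain ⟨u, hu⟩ := hk_even
        exact ⟨u - a, by omega⟩
      obtain ⟨t, ht⟩ := hkm_even
      have h2t : f^[t] (f^[t] x) = flipD x := by
        rw [← Function.iterate_add_apply, ← ht]
        exact hmod
      have hfin := conjL f hR t (f^[t] x)
      rw [h2t, flipD_flipD] at hfin
      exact flipD_ne hloopless (f^[t] x) hfin.symm
  · -- ends_eq
    intro i
    beta_reduce
    have hy : f^[i + 1] x = f (f^[i] x) := Function.iterate_succ_apply' f i x
    rw [hy, hstep (f^[i] x), otherEnd_otherEnd (hmem (f^[i] x))]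
    rw [← otherEnd_spec (f^[i] x).2, Sym2.eq_swap]
  · -- alternation
    intro i
    beta_reduce
    rw [Function.iterate_succ_apply', hcol, Bool.not_not]

end Orbits

end AltTrailAux


/-- Let `G` be a finite multigraph (edge type `E`, endpoints `ends e`, no loops)
whose edges are colored red (`true`) or blue (`false`) so that at every vertex
the number of incident red edges equals the number of incident blue edges.
Then the edge set of `G` decomposes into edge-disjoint closed trails in which
red and blue edges alternate. -/
theorem alternating_trail_decomposition {V E : Type*}
    [Fintype V] [Fintype E] [DecidableEq V] [DecidableEq E]
    (ends : E → Sym2 V) (hloopless : ∀ e : E, ¬ (ends e).IsDiag)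
    (color : E → Bool)
    (hdeg : ∀ v : V,
      (Finset.univ.filter fun e : E => v ∈ ends e ∧ color e = true).card =
      (Finset.univ.filter fun e : E => v ∈ ends e ∧ color e = false).card) :
    ∃ P : Finset (Finset E),
      (∀ S ∈ P, ∃ T : AltClosedTrail V E ends color,
        (Finset.range T.n).image T.edge = S) ∧
      (↑P : Set (Finset E)).Pairwise Disjoint ∧
      P.biUnion id = Finset.univ := by
  classical
  set f : AltTrailAux.Dart ends → AltTrailAux.Dart ends :=
    AltTrailAux.nextD (hdeg := hdeg) with hf
  have hR : ∀ d, f (AltTrailAux.flipD (f d)) = AltTrailAux.flipD d :=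
    fun d => AltTrailAux.nextD_flipD_nextD d
  have hmem : ∀ d : AltTrailAux.Dart ends, d.1.2 ∈ ends (f d).1.1 :=
    fun d => AltTrailAux.pair_mem hdeg d.2
  have hstep : ∀ d : AltTrailAux.Dart ends,
      (f d).1.2 = AltTrailAux.otherEnd ends (f d).1.1 d.1.2 := fun d => rfl
  have hcol : ∀ d : AltTrailAux.Dart ends, color (f d).1.1 = !color d.1.1 :=
    fun d => AltTrailAux.pair_color hdeg d.2
  refine ⟨Finset.univ.image (fun x : AltTrailAux.Dart ends => AltTrailAux.orbitEdges f x),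
    ?_, ?_, ?_⟩
  · intro S hS
    obtain ⟨x, -, rfl⟩ := Finset.mem_image.mp hS
    exact AltTrailAux.exists_trail hloopless f hR hmem hstep hcol x
  · intro S1 hS1 S2 hS2 hne
    rw [Finset.mem_coe, Finset.mem_image] at hS1 hS2
    obtain ⟨x1, -, rfl⟩ := hS1
    obtain ⟨x2, -, rfl⟩ := hS2
    rw [Finset.disjoint_left]
    intro e he1 he2
    apply hne
    obtain ⟨n1, hn1⟩ := (AltTrailAux.mem_orbitEdges f hR).mp he1
    obtain ⟨n2, hn2⟩ := (AltTrailAux.mem_orbitEdges f hR).mp he2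
    have e1 := (AltTrailAux.orbitEdges_iterate f hR x1 n1).symm
    have e2 := (AltTrailAux.orbitEdges_iterate f hR x2 n2).symm
    rcases AltTrailAux.dart_eq_or_flip (f^[n1] x1) (f^[n2] x2)
        (by rw [hn1, hn2]) with h | h
    · rw [e1, e2, h]
    · rw [e1, e2, h, AltTrailAux.orbitEdges_flip f hR]
  · ext e
    simp only [Finset.mem_biUnion, Finset.mem_univ, iff_true, id]
    refine ⟨AltTrailAux.orbitEdges f ⟨(e, (ends e).out.1), Sym2.out_fst_mem _⟩,
      Finset.mem_image_of_mem _ (Finset.mem_univ _), ?_⟩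
    exact (AltTrailAux.mem_orbitEdges f hR).mpr ⟨0, rfl⟩

end Auxiliary
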